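/- arXiv:2512.14269 — 5 statements merged into one kernel-verified Lean document; each statement's English description precedes it below -/
import Mathlib

section
/- Let j ≥ 1, let p ∈ ℝ[x₁,…,x_j] be a nonzero polynomial, and let S ⊆ ℝ^j be a connected set. For r ∈ ℝ^j define ord(p,r) as the minimum k ∈ ℕ such that some iterated formal partial derivative of p of total order k does not vanish at r. If ord(p,r) = ord(p,r') for all r, r' ∈ S (i.e., p is order-invariant on S), then p is sign-invariant over S. -/
/-!
At a point where `p` does not vanish its order is `0`. Conversely, a nonzero polynomial has some
iterated partial derivative that is nonzero at any given point (differentiate until the total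
degree drops to `0`), so the set defining `ord p r` is nonempty and `ord p r = 0` forces
`p r ≠ 0`. Hence an order-invariant `p` either vanishes on all of `S` or nowhere on `S`, and in
the latter case the intermediate value theorem on the connected set `S` fixes its sign.
-/

/-- A polynomial `p ∈ ℝ[x₁,…,x_j]` is sign-invariant over a set `S ⊆ ℝ^j` if there is a
fixed relation `∼ ∈ {<,=,>}` such that `p(r) ∼ 0` for all `r ∈ S`. -/
def SignInvariantOn {σ : Type*} (p : MvPolynomial σ ℝ) (S : Set (σ → ℝ)) : Prop :=
  (∀ r ∈ S, MvPolynomial.eval r p < 0) ∨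
    (∀ r ∈ S, MvPolynomial.eval r p = 0) ∨
    (∀ r ∈ S, 0 < MvPolynomial.eval r p)

/-- The order `ord(p,r)` of `p` at `r ∈ ℝ^j`: the minimum `k ∈ ℕ` such that some iterated
formal partial derivative of `p` of total order `k` does not vanish at `r`. -/
noncomputable def ord {j : ℕ} (p : MvPolynomial (Fin j) ℝ) (r : Fin j → ℝ) : ℕ :=
  sInf {k : ℕ | ∃ l : List (Fin j), l.length = k ∧
    MvPolynomial.eval r (l.foldr (fun v q => MvPolynomial.pderiv v q) p) ≠ 0}

open MvPolynomial

namespace MvPolynomial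

variable {σ R : Type*}

theorem totalDegree_pderiv_lt [CommSemiring R] {p : MvPolynomial σ R} (hp : 0 < p.totalDegree)
    (i : σ) : (pderiv i p).totalDegree < p.totalDegree := by
  classical
  refine (Finset.sup_lt_iff hp).2 fun m hm => ?_
  have hcoeff : coeff (m + Finsupp.single i 1) p ≠ 0 := by
    have hm' := mem_support_iff.1 hm
    rw [coeff_pderiv] at hm'
    exact left_ne_zero_of_mul hm'
  have hdeg := le_totalDegree (mem_support_iff.2 hcoeff)
  rw [Finsupp.sum_add_index' (fun _ => rfl) (fun _ _ _ => rfl),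
    Finsupp.sum_single_index rfl] at hdeg
  omega

theorem exists_pderiv_ne_zero [CommSemiring R] [NoZeroDivisors R] [CharZero R]
    {p : MvPolynomial σ R} (hp : 0 < p.totalDegree) : ∃ i, pderiv i p ≠ 0 := by
  classical
  obtain ⟨m, hm, hm0⟩ := (Finset.lt_sup_iff (f := fun s : σ →₀ ℕ => s.sum fun _ e => e)).1 hp
  obtain ⟨i, hi⟩ : ∃ i, m i ≠ 0 := by
    by_contra! h
    rw [show m = 0 from Finsupp.ext h, Finsupp.sum_zero_index] at hm0
    exact hm0.false
  refine ⟨i, ne_zero_iff.2 ⟨m - Finsupp.single i 1, ?_⟩⟩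
  rw [coeff_pderiv, Finsupp.sub_add_single_one_cancel hi]
  exact mul_ne_zero (mem_support_iff.1 hm) (Nat.cast_add_one_ne_zero _)

theorem exists_eval_foldr_pderiv_ne_zero [CommSemiring R] [NoZeroDivisors R] [CharZero R]
    {p : MvPolynomial σ R} (hp : p ≠ 0) (r : σ → R) :
    ∃ l : List σ, eval r (l.foldr (fun v q => pderiv v q) p) ≠ 0 := by
  induction hd : p.totalDegree using Nat.strong_induction_on generalizing p with
  | _ n ih =>
  rcases Nat.eq_zero_or_pos n with rfl | hpos
  · rw [totalDegree_eq_zero_iff_eq_C] at hd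
    rw [hd] at hp
    exact ⟨[], by rwa [List.foldr_nil, hd, eval_C, ← C_ne_zero]⟩
  · rw [← hd] at hpos
    obtain ⟨i, hi⟩ := exists_pderiv_ne_zero hpos
    obtain ⟨l, hl⟩ := ih _ (hd ▸ totalDegree_pderiv_lt hpos i) hi rfl
    exact ⟨l ++ [i], by rwa [List.foldr_append]⟩

end MvPolynomial

theorem ord_eq_zero_iff {j : ℕ} {p : MvPolynomial (Fin j) ℝ} (hp : p ≠ 0) (r : Fin j → ℝ) :
    ord p r = 0 ↔ eval r p ≠ 0 := by
  obtain ⟨l, hl⟩ := exists_eval_foldr_pderiv_ne_zero hp r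
  rw [ord, Nat.sInf_eq_zero]
  constructor
  · rintro (⟨l₀, hl₀, hne⟩ | hempty)
    · rwa [List.length_eq_zero_iff.1 hl₀] at hne
    · exact (Set.eq_empty_iff_forall_notMem.1 hempty _ ⟨l, rfl, hl⟩).elim
  · exact fun h => Or.inl ⟨[], rfl, h⟩

theorem signInvariantOn_of_eval_ne_zero {σ : Type*} {p : MvPolynomial σ ℝ} {S : Set (σ → ℝ)}
    (hS : IsPreconnected S) (hne : ∀ r ∈ S, eval r p ≠ 0) : SignInvariantOn p S := by
  have no_sign_change : ∀ a ∈ S, ∀ b ∈ S, eval a p < 0 → ¬0 < eval b p := by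
    intro a ha b hb ha0 hb0
    obtain ⟨c, hc, hc0⟩ :=
      hS.intermediate_value ha hb (continuous_eval p).continuousOn ⟨ha0.le, hb0.le⟩
    exact hne c hc hc0
  by_cases hneg : ∃ a ∈ S, eval a p < 0
  · obtain ⟨a, ha, ha0⟩ := hneg
    exact Or.inl fun b hb => (hne b hb).lt_or_gt.resolve_right (no_sign_change a ha b hb ha0)
  · push Not at hneg
    exact Or.inr (Or.inr fun b hb => (hneg b hb).lt_of_ne' (hne b hb))

theorem stmt_5_general (j : ℕ)
    (p : MvPolynomial (Fin j) ℝ) (hp : p ≠ 0)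
    (S : Set (Fin j → ℝ)) (hS : IsConnected S)
    (hord : ∀ r ∈ S, ∀ r' ∈ S, ord p r = ord p r') :
    SignInvariantOn p S := by
  by_cases hzero : ∃ r₀ ∈ S, eval r₀ p = 0
  · obtain ⟨r₀, hr₀, hpr₀⟩ := hzero
    refine Or.inr (Or.inl fun r hr => ?_)
    by_contra hpr
    have hord₀ := (ord_eq_zero_iff hp r).2 hpr
    rw [hord r hr r₀ hr₀, ord_eq_zero_iff hp] at hord₀
    exact hord₀ hpr₀
  · push Not at hzero
    exact signInvariantOn_of_eval_ne_zero hS.isPreconnected hzero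

/-- Let `j ≥ 1`, let `p ∈ ℝ[x₁,…,x_j]` be nonzero, and let `S ⊆ ℝ^j`
be a connected set. If `p` is order-invariant on `S` (i.e. `ord(p,r) = ord(p,r')` for
all `r, r' ∈ S`), then `p` is sign-invariant over `S`. -/
theorem stmt_5 (j : ℕ) (hj : 1 ≤ j)
    (p : MvPolynomial (Fin j) ℝ) (hp : p ≠ 0)
    (S : Set (Fin j → ℝ)) (hS : IsConnected S)
    (hord : ∀ r ∈ S, ∀ r' ∈ S, ord p r = ord p r') :
    SignInvariantOn p S :=
  stmt_5_general j p hp S hS hord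
end

section
/- Let j ≥ 2, let p, q ∈ ℝ[x₁,…,x_j] have positive degree in x_j, let S ⊆ ℝ^{j−1} be a connected set, and let θ, η : ℝ^{j−1} → ℝ be functions that are continuous on S and satisfy p(r, θ(r)) = 0 and q(r, η(r)) = 0 for all r ∈ S. Suppose the resultant of p and q with respect to x_j evaluates to a nonzero value at every r ∈ S, and suppose θ(s₀) < η(s₀) for some s₀ ∈ S. Then θ(r) < η(r) for all r ∈ S. -/
/-- The Sylvester matrix of two polynomials `p` and `q` over a commutative ring,
viewed with nominal degrees `p.natDegree` and `q.natDegree`: the first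
`q.natDegree` rows contain the shifted coefficient sequences of `p`, the last
`p.natDegree` rows contain the shifted coefficient sequences of `q`. -/
noncomputable def sylvesterMatrix {R : Type*} [CommRing R] (p q : Polynomial R) :
    Matrix (Fin (q.natDegree + p.natDegree)) (Fin (q.natDegree + p.natDegree)) R :=
  fun i j =>
    if (i : ℕ) < q.natDegree then
      if (i : ℕ) ≤ (j : ℕ) ∧ (j : ℕ) ≤ (i : ℕ) + p.natDegree then
        p.coeff (p.natDegree + (i : ℕ) - (j : ℕ))
      else 0
    else
      if (i : ℕ) - q.natDegree ≤ (j : ℕ) ∧ (j : ℕ) ≤ ((i : ℕ) - q.natDegree) + q.natDegree then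
        q.coeff (q.natDegree + ((i : ℕ) - q.natDegree) - (j : ℕ))
      else 0

/-- The resultant of two polynomials, defined as the determinant of their
Sylvester matrix. -/
noncomputable def resultant {R : Type*} [CommRing R] (p q : Polynomial R) : R :=
  (sylvesterMatrix p q).det

/-! A common root `t` of `p` and `q` (after specialising the coefficients along `φ`) makes the
vector of powers `(t ^ (N - 1), …, t, 1)` a kernel vector of the specialised Sylvester matrix,
because each row pairs with it to `t ^ e • p(t)` or `t ^ e • q(t)`. Over a domain the
resultant therefore vanishes at every point where `θ = η`; as `η - θ` is continuous on the
connected set `S` and positive at `s₀`, it can only become non-positive by passing through `0`. -/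

open Finset
open Polynomial (eval₂)
open scoped Polynomial Matrix

section Sylvester

variable {R S : Type*} [CommRing R] [CommRing S]

lemma sum_range_band_mul_pow (a : ℕ → S) (t : S) {n N i : ℕ} (hi : i + n < N) :
    ∑ j ∈ range N, (if i ≤ j ∧ j ≤ i + n then a (n + i - j) * t ^ (N - 1 - j) else 0)
      = t ^ (N - 1 - n - i) * ∑ k ∈ range (n + 1), a k * t ^ k := by
  rw [← sum_filter, mul_sum]
  apply sum_nbij' (fun j => i + n - j) (fun k => i + n - k)
  case h =>
    intro x hx
    simp only [mem_filter, mem_range] at hx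
    rw [show n + i - x = i + n - x by omega,
      show N - 1 - x = (N - 1 - n - i) + (i + n - x) by omega, pow_add]
    ring
  all_goals
    intro x hx
    simp only [mem_filter, mem_range] at hx ⊢
    omega

lemma eval₂_eq_sum_range_natDegree (φ : R →+* S) (t : S) (p : R[X]) :
    eval₂ φ t p = ∑ k ∈ range (p.natDegree + 1), φ (p.coeff k) * t ^ k :=
  Polynomial.eval₂_eq_sum_range' φ (Nat.lt_succ_self _) t

lemma sylvesterMatrix_map_mulVec_pow (φ : R →+* S) (p q : R[X]) (t : S)
    (i : Fin (q.natDegree + p.natDegree)) :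
    ((sylvesterMatrix p q).map φ *ᵥ fun k => t ^ (q.natDegree + p.natDegree - 1 - k)) i =
      if (i : ℕ) < q.natDegree then
        t ^ (q.natDegree + p.natDegree - 1 - p.natDegree - i) * eval₂ φ t p
      else
        t ^ (q.natDegree + p.natDegree - 1 - q.natDegree - (i - q.natDegree)) * eval₂ φ t q := by
  simp only [Matrix.mulVec, dotProduct, Matrix.map_apply, sylvesterMatrix]
  split_ifs with hi
  · rw [eval₂_eq_sum_range_natDegree, ← sum_range_band_mul_pow (fun k => φ (p.coeff k)) t
      (by omega), ← Fin.sum_univ_eq_sum_range]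
    simp only [apply_ite φ, map_zero, ite_mul, zero_mul]
  · rw [eval₂_eq_sum_range_natDegree, ← sum_range_band_mul_pow (fun k => φ (q.coeff k)) t
      (by omega), ← Fin.sum_univ_eq_sum_range]
    simp only [apply_ite φ, map_zero, ite_mul, zero_mul]

lemma map_resultant_eq_zero_of_eval₂_eq_zero [IsDomain S] (φ : R →+* S) {p q : R[X]}
    (hp : 0 < p.natDegree) {t : S} (hpt : eval₂ φ t p = 0) (hqt : eval₂ φ t q = 0) :
    φ (resultant p q) = 0 := by
  rw [resultant, RingHom.map_det, ← Matrix.exists_mulVec_eq_zero_iff]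
  refine ⟨fun k => t ^ (q.natDegree + p.natDegree - 1 - k), fun h => ?_, ?_⟩
  · have hlast := congrFun h ⟨q.natDegree + p.natDegree - 1, by omega⟩
    simp at hlast
  · funext i
    rw [RingHom.mapMatrix_apply, sylvesterMatrix_map_mulVec_pow, hpt, hqt]
    simp

end Sylvester

lemma IsPreconnected.lt_of_forall_ne {X α : Type*} [TopologicalSpace X] [LinearOrder α]
    [TopologicalSpace α] [OrderClosedTopology α] {s : Set X} (hs : IsPreconnected s)
    {f g : X → α} (hf : ContinuousOn f s) (hg : ContinuousOn g s)
    (hne : ∀ x ∈ s, f x ≠ g x) {a : X} (ha : a ∈ s) (hlt : f a < g a) :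
    ∀ x ∈ s, f x < g x := by
  intro x hx
  by_contra! hle
  obtain ⟨y, hy, hfg⟩ := hs.intermediate_value₂ ha hx hf hg hlt.le hle
  exact hne y hy hfg

theorem stmt_6_general (j : ℕ)
    (p q : Polynomial (MvPolynomial (Fin (j - 1)) ℝ))
    (hp : 0 < p.natDegree)
    (S : Set (Fin (j - 1) → ℝ)) (hS : IsConnected S)
    (θ η : (Fin (j - 1) → ℝ) → ℝ)
    (hθc : ContinuousOn θ S) (hηc : ContinuousOn η S)
    (hθ : ∀ r ∈ S, Polynomial.eval₂ (MvPolynomial.eval r) (θ r) p = 0)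
    (hη : ∀ r ∈ S, Polynomial.eval₂ (MvPolynomial.eval r) (η r) q = 0)
    (hres : ∀ r ∈ S, MvPolynomial.eval r (resultant p q) ≠ 0)
    (s₀ : Fin (j - 1) → ℝ) (hs₀ : s₀ ∈ S) (hlt : θ s₀ < η s₀) :
    ∀ r ∈ S, θ r < η r := by
  have hne : ∀ r ∈ S, θ r ≠ η r := fun r hr hr_eq =>
    hres r hr <| map_resultant_eq_zero_of_eval₂_eq_zero _ hp (hθ r hr) (hr_eq ▸ hη r hr)
  exact hS.isPreconnected.lt_of_forall_ne hθc hηc hne hs₀ hlt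

/-- Let `j ≥ 2`, let `p, q ∈ ℝ[x₁,…,x_j]` have positive degree in
`x_j` (viewed as univariate in `x_j` over `ℝ[x₁,…,x_{j-1}]`), let `S ⊆ ℝ^{j-1}` be a
connected set, and let `θ, η` be continuous on `S` with `p(r, θ(r)) = 0` and
`q(r, η(r)) = 0` for all `r ∈ S`. If the resultant of `p` and `q` w.r.t. `x_j` is
nonzero at every `r ∈ S`, and `θ(s₀) < η(s₀)` for some `s₀ ∈ S`, then `θ(r) < η(r)`
for all `r ∈ S`. -/
theorem stmt_6 (j : ℕ) (hj : 2 ≤ j)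
    (p q : Polynomial (MvPolynomial (Fin (j - 1)) ℝ))
    (hp : 0 < p.natDegree) (hq : 0 < q.natDegree)
    (S : Set (Fin (j - 1) → ℝ)) (hS : IsConnected S)
    (θ η : (Fin (j - 1) → ℝ) → ℝ)
    (hθc : ContinuousOn θ S) (hηc : ContinuousOn η S)
    (hθ : ∀ r ∈ S, Polynomial.eval₂ (MvPolynomial.eval r) (θ r) p = 0)
    (hη : ∀ r ∈ S, Polynomial.eval₂ (MvPolynomial.eval r) (η r) q = 0)
    (hres : ∀ r ∈ S, MvPolynomial.eval r (resultant p q) ≠ 0)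
    (s₀ : Fin (j - 1) → ℝ) (hs₀ : s₀ ∈ S) (hlt : θ s₀ < η s₀) :
    ∀ r ∈ S, θ r < η r :=
  stmt_6_general j p q hp S hS θ η hθc hηc hθ hη hres s₀ hs₀ hlt
end

section
/- Let j ≥ 2, let S ⊆ ℝ^{j−1} be a connected set, and let f, g : ℝ^{j−1} → ℝ be functions that are continuous on S and satisfy f(r) < g(r) for all r ∈ S. Then the set {(r,t) ∈ ℝ^{j−1} × ℝ : r ∈ S and f(r) < t < g(r)} is a connected subset of ℝ^j. -/
open Set AffineMap

variable {α : Type*} {f g : α → ℝ} {s : Set α}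

theorem regionBetween_eq_image_lineMap (hfg : ∀ x ∈ s, f x < g x) :
    regionBetween f g s =
      (fun p : α × ℝ => (p.1, lineMap (f p.1) (g p.1) p.2)) '' (s ×ˢ Ioo 0 1) := by
  ext ⟨x, y⟩
  simp only [regionBetween, mem_ofPred_eq, mem_image, mem_prod, Prod.exists, Prod.mk.injEq]
  constructor
  · rintro ⟨hx, hy⟩
    rw [← openSegment_eq_Ioo (hfg x hx), openSegment_eq_image_lineMap] at hy
    obtain ⟨t, ht, rfl⟩ := hy
    exact ⟨x, t, ⟨hx, ht⟩, rfl, rfl⟩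
  · rintro ⟨x, t, ⟨hx, ht⟩, rfl, rfl⟩
    refine ⟨hx, ?_⟩
    rw [← openSegment_eq_Ioo (hfg x hx)]
    exact lineMap_mem_openSegment ℝ _ _ ht

theorem IsConnected.regionBetween [TopologicalSpace α] (hs : IsConnected s)
    (hf : ContinuousOn f s) (hg : ContinuousOn g s) (hfg : ∀ x ∈ s, f x < g x) :
    IsConnected (regionBetween f g s) := by
  rw [regionBetween_eq_image_lineMap hfg]
  exact (hs.prod (isConnected_Ioo zero_lt_one)).image _ <| continuousOn_fst.prodMk <|
    (hf.comp continuousOn_fst fun _ hp => hp.1).lineMap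
      (hg.comp continuousOn_fst fun _ hp => hp.1) continuousOn_snd

theorem stmt_7_general (j : ℕ)
    (S : Set (Fin (j - 1) → ℝ)) (hS : IsConnected S)
    (f g : (Fin (j - 1) → ℝ) → ℝ)
    (hf : ContinuousOn f S) (hg : ContinuousOn g S)
    (hfg : ∀ r ∈ S, f r < g r) :
    IsConnected {x : (Fin (j - 1) → ℝ) × ℝ | x.1 ∈ S ∧ f x.1 < x.2 ∧ x.2 < g x.1} :=
  hS.regionBetween hf hg hfg

/-- Let `j ≥ 2`, let `S ⊆ ℝ^{j-1}` be a connected set, and let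
`f, g : ℝ^{j-1} → ℝ` be continuous on `S` with `f(r) < g(r)` for all `r ∈ S`. Then
`{(r,t) : r ∈ S and f(r) < t < g(r)}` is a connected subset of `ℝ^j = ℝ^{j-1} × ℝ`. -/
theorem stmt_7 (j : ℕ) (hj : 2 ≤ j)
    (S : Set (Fin (j - 1) → ℝ)) (hS : IsConnected S)
    (f g : (Fin (j - 1) → ℝ) → ℝ)
    (hf : ContinuousOn f S) (hg : ContinuousOn g S)
    (hfg : ∀ r ∈ S, f r < g r) :
    IsConnected {x : (Fin (j - 1) → ℝ) × ℝ | x.1 ∈ S ∧ f x.1 < x.2 ∧ x.2 < g x.1} :=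
  stmt_7_general j S hS f g hf hg hfg
end

section
/- Let j ≥ 2, let S ⊆ ℝ^{j−1} be a connected set, and let f : ℝ^{j−1} → ℝ be a function that is continuous on S. Then the set {(r,t) ∈ ℝ^{j−1} × ℝ : r ∈ S and t > f(r)} is a connected subset of ℝ^j. -/
/-- Let `j ≥ 2`, let `S ⊆ ℝ^{j-1}` be a connected set, and let
`f : ℝ^{j-1} → ℝ` be continuous on `S`. Then `{(r,t) : r ∈ S and t > f(r)}` is a
connected subset of `ℝ^j = ℝ^{j-1} × ℝ`. -/
theorem stmt_8 (j : ℕ) (hj : 2 ≤ j)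
    (S : Set (Fin (j - 1) → ℝ)) (hS : IsConnected S)
    (f : (Fin (j - 1) → ℝ) → ℝ) (hf : ContinuousOn f S) :
    IsConnected {x : (Fin (j - 1) → ℝ) × ℝ | x.1 ∈ S ∧ f x.1 < x.2} := by
  have himg : {x : (Fin (j - 1) → ℝ) × ℝ | x.1 ∈ S ∧ f x.1 < x.2} =
      (fun p : (Fin (j - 1) → ℝ) × ℝ => (p.1, f p.1 + p.2)) '' (S ×ˢ Set.Ioi 0) := by
    ext ⟨r, t⟩
    constructor
    · rintro ⟨hr, hlt⟩
      exact ⟨(r, t - f r), ⟨hr, by simpa using hlt⟩, by simp⟩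
    · rintro ⟨⟨r', t'⟩, ⟨hr', ht'⟩, h⟩
      cases h
      exact ⟨hr', by simpa using ht'⟩
  rw [himg]
  refine (hS.prod ⟨⟨1, Set.mem_Ioi.2 one_pos⟩, isPreconnected_Ioi⟩).image _ ?_
  exact ContinuousOn.prodMk continuousOn_fst
    ((hf.comp continuousOn_fst (fun p hp => hp.1)).add continuousOn_snd)
end

section
/- Let j ≥ 2, let p ∈ ℝ[x₁,…,x_j], let S ⊆ ℝ^{j−1} be a nonempty connected set, and let f, g : ℝ^{j−1} → ℝ be continuous on S with f(r) < g(r) for all r ∈ S. Let C := {(r,t) ∈ ℝ^{j−1} × ℝ : r ∈ S and f(r) < t < g(r)}. If p(r,t) ≠ 0 for all (r,t) ∈ C, then p is sign-invariant over C; that is, either p(r,t) > 0 for all (r,t) ∈ C or p(r,t) < 0 for all (r,t) ∈ C. -/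
/-!
The sector `C` over `S` is the image of the preconnected set `S × (0, 1)` under the continuous
map `(r, s) ↦ (r, (1 - s) f(r) + s g(r))`, so it is preconnected; by the intermediate value
theorem a continuous function without zeros on a preconnected set has constant sign.
-/

open Set

theorem Polynomial.continuous_eval₂_mvPolynomialEval {R σ : Type*} [TopologicalSpace R]
    [CommSemiring R] [IsTopologicalSemiring R] (p : Polynomial (MvPolynomial σ R)) :
    Continuous fun x : (σ → R) × R => p.eval₂ (MvPolynomial.eval x.1) x.2 := by
  simp only [Polynomial.eval₂_eq_sum, Polynomial.sum]
  exact continuous_finsetSum _ fun i _ =>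
    ((MvPolynomial.continuous_eval _).comp continuous_fst).mul
      ((continuous_pow i).comp continuous_snd)

theorem IsPreconnected.lt_or_gt_of_ne {X α : Type*} [TopologicalSpace X] [LinearOrder α]
    [TopologicalSpace α] [OrderClosedTopology α] {s : Set X} (hs : IsPreconnected s)
    {f : X → α} (hf : ContinuousOn f s) {c : α} (hne : ∀ x ∈ s, f x ≠ c) :
    (∀ x ∈ s, c < f x) ∨ (∀ x ∈ s, f x < c) := by
  by_contra! h
  obtain ⟨⟨a, ha, hfa⟩, ⟨b, hb, hfb⟩⟩ := h
  obtain ⟨x, hx, hfx⟩ := hs.intermediate_value ha hb hf ⟨hfa, hfb⟩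
  exact hne x hx hfx

def sector {X : Type*} (S : Set X) (f g : X → ℝ) : Set (X × ℝ) :=
  {x | x.1 ∈ S ∧ x.2 ∈ Ioo (f x.1) (g x.1)}

theorem sector_eq_image {X : Type*} {S : Set X} {f g : X → ℝ} (hfg : ∀ r ∈ S, f r < g r) :
    sector S f g =
      (fun x : X × ℝ => (x.1, AffineMap.lineMap (f x.1) (g x.1) x.2)) '' (S ×ˢ Ioo 0 1) := by
  ext ⟨r, t⟩
  simp only [sector, mem_ofPred_eq, mem_image, mem_prod, Prod.exists, Prod.mk.injEq]
  constructor
  · rintro ⟨hr, ht⟩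
    rw [← openSegment_eq_Ioo (hfg r hr), openSegment_eq_image_lineMap] at ht
    obtain ⟨s, hs, rfl⟩ := ht
    exact ⟨r, s, ⟨hr, hs⟩, rfl, rfl⟩
  · rintro ⟨r, s, ⟨hr, hs⟩, rfl, rfl⟩
    refine ⟨hr, openSegment_subset_Ioo (𝕜 := ℝ) (hfg r hr) ?_⟩
    exact lineMap_mem_openSegment ℝ _ _ hs

theorem IsPreconnected.sector {X : Type*} [TopologicalSpace X] {S : Set X}
    (hS : IsPreconnected S) {f g : X → ℝ} (hf : ContinuousOn f S) (hg : ContinuousOn g S)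
    (hfg : ∀ r ∈ S, f r < g r) : IsPreconnected (sector S f g) := by
  rw [sector_eq_image hfg]
  refine (hS.prod isPreconnected_Ioo).image _ (continuousOn_fst.prodMk ?_)
  have hf' : ContinuousOn (fun x : X × ℝ => f x.1) (S ×ˢ Ioo 0 1) :=
    hf.comp continuousOn_fst mapsTo_fst_prod
  have hg' : ContinuousOn (fun x : X × ℝ => g x.1) (S ×ˢ Ioo 0 1) :=
    hg.comp continuousOn_fst mapsTo_fst_prod
  simp only [AffineMap.lineMap_apply_ring']
  exact (continuousOn_snd.mul (hg'.sub hf')).add hf'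

theorem stmt_9_general (j : ℕ)
    (p : Polynomial (MvPolynomial (Fin (j - 1)) ℝ))
    (S : Set (Fin (j - 1) → ℝ)) (hS : IsConnected S)
    (f g : (Fin (j - 1) → ℝ) → ℝ)
    (hf : ContinuousOn f S) (hg : ContinuousOn g S)
    (hfg : ∀ r ∈ S, f r < g r)
    (hnz : ∀ r ∈ S, ∀ t : ℝ, f r < t → t < g r →
      Polynomial.eval₂ (MvPolynomial.eval r) t p ≠ 0) :
    (∀ r ∈ S, ∀ t : ℝ, f r < t → t < g r →
        0 < Polynomial.eval₂ (MvPolynomial.eval r) t p) ∨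
      (∀ r ∈ S, ∀ t : ℝ, f r < t → t < g r →
        Polynomial.eval₂ (MvPolynomial.eval r) t p < 0) := by
  have hsign := (hS.isPreconnected.sector hf hg hfg).lt_or_gt_of_ne
    p.continuous_eval₂_mvPolynomialEval.continuousOn
    fun x hx => hnz x.1 hx.1 x.2 hx.2.1 hx.2.2
  rcases hsign with hpos | hneg
  · exact Or.inl fun r hr t hft htg => hpos (r, t) ⟨hr, hft, htg⟩
  · exact Or.inr fun r hr t hft htg => hneg (r, t) ⟨hr, hft, htg⟩

/-- Let `j ≥ 2`, let `p ∈ ℝ[x₁,…,x_j]` (viewed as univariate in `x_j`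
over `ℝ[x₁,…,x_{j-1}]`), let `S ⊆ ℝ^{j-1}` be a nonempty connected set, and let
`f, g` be continuous on `S` with `f(r) < g(r)` for all `r ∈ S`. Let
`C := {(r,t) : r ∈ S and f(r) < t < g(r)}`. If `p(r,t) ≠ 0` on all of `C`, then `p` is
sign-invariant over `C`: either `p > 0` on all of `C` or `p < 0` on all of `C`. -/
theorem stmt_9 (j : ℕ) (hj : 2 ≤ j)
    (p : Polynomial (MvPolynomial (Fin (j - 1)) ℝ))
    (S : Set (Fin (j - 1) → ℝ)) (hS : IsConnected S)
    (f g : (Fin (j - 1) → ℝ) → ℝ)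
    (hf : ContinuousOn f S) (hg : ContinuousOn g S)
    (hfg : ∀ r ∈ S, f r < g r)
    (hnz : ∀ r ∈ S, ∀ t : ℝ, f r < t → t < g r →
      Polynomial.eval₂ (MvPolynomial.eval r) t p ≠ 0) :
    (∀ r ∈ S, ∀ t : ℝ, f r < t → t < g r →
        0 < Polynomial.eval₂ (MvPolynomial.eval r) t p) ∨
      (∀ r ∈ S, ∀ t : ℝ, f r < t → t < g r →
        Polynomial.eval₂ (MvPolynomial.eval r) t p < 0) :=
  stmt_9_general j p S hS f g hf hg hfg hnz
end
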